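/- Define Θ : ℝ^{n+1} ∖ ℝ^{k−1} → ℝ^{n+3} by Θ(x) = ‖x^⊥‖^{−1} ( v − (1/2)‖x‖² w + C xᵀ + C x^⊥ ), where v, w are lightlike vectors in Lorentzian ℝ^{n+3} with ⟨v,w⟩ = 1 and C : ℝ^{n+1} → (span{v,w})^⊥ is a linear isometry. Write ℝ^{n+3} = W₁ ⊕ W₂ orthogonally with W₁ = C(ℝ^{k−1}) ⊕ span{v,w} and W₂ = C(ℝ^{n−k+2}), and write Θ(x) = Θ(x)₁ + Θ(x)₂ accordingly. Then for every x: ⟨Θ(x)₁, Θ(x)₁⟩ = −1 and ⟨Θ(x)₂, Θ(x)₂⟩ = 1; that is, Θ takes values in ℍ^k × 𝕊^{n−k+1} ⊂ W₁ ⊕ W₂. -/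

import Mathlib

open scoped RealInnerProductSpace

/-- The component of `x` in `ℝ^{n-k+2} = (ℝ^{k-1})^⊥`. -/
def perpPart (n k : ℕ) (x : EuclideanSpace ℝ (Fin (n + 1))) :
    EuclideanSpace ℝ (Fin (n + 1)) :=
  WithLp.toLp 2 (fun i => if (i : ℕ) < k - 1 then 0 else x i)

/-!
Against the null pair `v, w`, the vector `v - c • w + a` with `a ⊥ v, w` has square
`B a a - 2c`. For `Θ(x)₁` this is `‖xᵀ‖² - ‖x‖² = -‖x^⊥‖²` by Pythagoras, and `Θ(x)₂` is the unit
vector `C x^⊥ / ‖x^⊥‖` because `C` is an isometry; rescaling by `‖x^⊥‖⁻¹` gives `-1` and `1`.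
-/

theorem inner_sub_perpPart_perpPart (n k : ℕ) (x : EuclideanSpace ℝ (Fin (n + 1))) :
    ⟪x - perpPart n k x, perpPart n k x⟫ = 0 := by
  simp only [PiLp.inner_apply, RCLike.inner_apply, conj_trivial]
  refine Finset.sum_eq_zero fun i _ => ?_
  by_cases h : (i : ℕ) < k - 1 <;> simp [perpPart, h]

theorem norm_sub_perpPart_sq (n k : ℕ) (x : EuclideanSpace ℝ (Fin (n + 1))) :
    ‖x - perpPart n k x‖ ^ 2 = ‖x‖ ^ 2 - ‖perpPart n k x‖ ^ 2 := by
  have h := norm_add_sq_eq_norm_sq_add_norm_sq_real (inner_sub_perpPart_perpPart n k x)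
  rw [sub_add_cancel] at h
  rw [sq, sq, sq, h]
  ring

namespace LinearMap.BilinForm

variable {R M : Type*} [CommRing R] [AddCommGroup M] [Module R M] (B : LinearMap.BilinForm R M)

theorem apply_smul_self (t : R) (a : M) : B (t • a) (t • a) = t ^ 2 * B a a := by
  simp only [map_smul, LinearMap.smul_apply, smul_eq_mul]
  ring

theorem apply_null_pair_add_self (hsymm : ∀ a b, B a b = B b a) {v w a : M}
    (hvv : B v v = 0) (hww : B w w = 0) (hvw : B v w = 1) (hav : B a v = 0) (haw : B a w = 0)
    (c : R) : B (v - c • w + a) (v - c • w + a) = B a a - 2 * c := by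
  have hwv : B w v = 1 := by rw [hsymm, hvw]
  have hva : B v a = 0 := by rw [hsymm, hav]
  have hwa : B w a = 0 := by rw [hsymm, haw]
  simp only [map_add, map_sub, map_smul, LinearMap.add_apply, LinearMap.sub_apply,
    LinearMap.smul_apply, smul_eq_mul, hvv, hww, hvw, hwv, hav, haw, hva, hwa]
  ring

end LinearMap.BilinForm

theorem stmt14_general {n k : ℕ} {L : Type*} [AddCommGroup L] [Module ℝ L]
    (B : LinearMap.BilinForm ℝ L) (hsymm : ∀ a b : L, B a b = B b a)
    (v w : L) (hww : B w w = 0) (hvv : B v v = 0) (hvw : B v w = 1)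
    (C : EuclideanSpace ℝ (Fin (n + 1)) →ₗ[ℝ] L)
    (hC : ∀ x y, B (C x) (C y) = ⟪x, y⟫)
    (hCv : ∀ x, B (C x) v = 0) (hCw : ∀ x, B (C x) w = 0)
    (x : EuclideanSpace ℝ (Fin (n + 1))) (hx : perpPart n k x ≠ 0) :
    B (‖perpPart n k x‖⁻¹ •
        (v - ((1 / 2) * ‖x‖ ^ 2) • w + C (x - perpPart n k x)))
      (‖perpPart n k x‖⁻¹ •
        (v - ((1 / 2) * ‖x‖ ^ 2) • w + C (x - perpPart n k x))) = -1 ∧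
    B (‖perpPart n k x‖⁻¹ • C (perpPart n k x))
      (‖perpPart n k x‖⁻¹ • C (perpPart n k x)) = 1 := by
  have hp : ‖perpPart n k x‖ ≠ 0 := norm_ne_zero_iff.mpr hx
  have hC_self : ∀ y, B (C y) (C y) = ‖y‖ ^ 2 := fun y => by
    rw [hC, real_inner_self_eq_norm_sq]
  rw [B.apply_smul_self, B.apply_smul_self,
    B.apply_null_pair_add_self hsymm hvv hww hvw (hCv _) (hCw _), hC_self, hC_self,
    norm_sub_perpPart_sq]
  exact ⟨by field_simp; ring, by field_simp⟩

theorem stmt14 {n k : ℕ} (hk : 1 ≤ k) {L : Type*} [AddCommGroup L] [Module ℝ L]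
    (B : LinearMap.BilinForm ℝ L) (hsymm : ∀ a b : L, B a b = B b a)
    (v w : L) (hww : B w w = 0) (hvv : B v v = 0) (hvw : B v w = 1)
    (C : EuclideanSpace ℝ (Fin (n + 1)) →ₗ[ℝ] L)
    (hC : ∀ x y, B (C x) (C y) = ⟪x, y⟫)
    (hCv : ∀ x, B (C x) v = 0) (hCw : ∀ x, B (C x) w = 0)
    (x : EuclideanSpace ℝ (Fin (n + 1))) (hx : perpPart n k x ≠ 0) :
    B (‖perpPart n k x‖⁻¹ •
        (v - ((1 / 2) * ‖x‖ ^ 2) • w + C (x - perpPart n k x)))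
      (‖perpPart n k x‖⁻¹ •
        (v - ((1 / 2) * ‖x‖ ^ 2) • w + C (x - perpPart n k x))) = -1 ∧
    B (‖perpPart n k x‖⁻¹ • C (perpPart n k x))
      (‖perpPart n k x‖⁻¹ • C (perpPart n k x)) = 1 :=
  stmt14_general B hsymm v w hww hvv hvw C hC hCv hCw x hx
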